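/- arXiv:2506.03894 — 5 statements merged into one kernel-verified Lean document; each statement's English description precedes it below -/
import Mathlib

section
/- For non-negative real numbers a and b, a·log(2a/(a+b)) + b·log(2b/(a+b)) ≥ (1/6)·(a-b)²/(a+b), with the conventions 0·log 0 = 0 and the left side interpreted as 0 when a = b = 0. -/
/-!
Assume `b ≤ a` (both sides are symmetric) and put `s = a + b`. The Padé bound
`log (1 + u) ≥ 2u / (2 + u)` gives `a log (2a/s) ≥ 2a(a - b)/(3a + b)`, and `log x ≥ 1 - 1/x`
gives `b log (2b/s) ≥ (b - a)/2`. These add up to `(a - b)² / (2(3a + b))`, which is at least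
`(a - b)² / (6s)`.
-/

open Real

lemma two_mul_sub_div_add_le_log_div {x y : ℝ} (hy : 0 < y) (hyx : y ≤ x) :
    2 * (x - y) / (x + y) ≤ log (x / y) := by
  have hpade := le_log_one_add_of_nonneg (div_nonneg (sub_nonneg.2 hyx) hy.le)
  rwa [one_add_div hy.ne', add_sub_cancel, div_add' _ _ _ hy.ne', mul_div_assoc',
    div_div_div_cancel_right₀ hy.ne', show x - y + 2 * y = x + y by ring] at hpade

lemma sub_le_mul_log_div {x y : ℝ} (hx : 0 ≤ x) (hy : 0 < y) :
    x - y ≤ x * log (x / y) := by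
  have h := mul_le_mul_of_nonneg_left (self_sub_one_le_mul_log (div_nonneg hx hy.le)) hy.le
  rwa [mul_sub, mul_div_cancel₀ _ hy.ne', mul_one, ← mul_assoc, mul_div_cancel₀ _ hy.ne'] at h

theorem log_chi_squared_reverse (a b : ℝ) (ha : 0 ≤ a) (hb : 0 ≤ b) :
    a * Real.log (2 * a / (a + b)) + b * Real.log (2 * b / (a + b)) ≥
      (1 / 6) * (a - b) ^ 2 / (a + b) := by
  wlog hba : b ≤ a generalizing a b
  · have h := this b a hb ha (le_of_not_ge hba)
    rwa [add_comm b a, sub_sq_comm b a, add_comm (b * _)] at h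
  obtain hs | hs := (add_nonneg ha hb).eq_or_lt
  · obtain ⟨rfl, rfl⟩ : a = 0 ∧ b = 0 := ⟨by linarith, by linarith⟩
    simp
  have h3 : 0 < 2 * a + (a + b) := by linarith
  have hlarge : a * (2 * (2 * a - (a + b)) / (2 * a + (a + b))) ≤ a * log (2 * a / (a + b)) :=
    mul_le_mul_of_nonneg_left (two_mul_sub_div_add_le_log_div hs (by linarith)) ha
  have hsmall : b - (a + b) / 2 ≤ b * log (2 * b / (a + b)) := by
    simpa [div_div_eq_mul_div, mul_comm] using sub_le_mul_log_div hb (half_pos hs)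
  calc (1 / 6) * (a - b) ^ 2 / (a + b) ≤ (a - b) ^ 2 / (2 * (2 * a + (a + b))) := by
        rw [div_le_div_iff₀ hs (by linarith)]
        nlinarith [sq_nonneg (a - b)]
    _ = a * (2 * (2 * a - (a + b)) / (2 * a + (a + b))) + (b - (a + b) / 2) := by
        field_simp
        ring
    _ ≤ _ := add_le_add hlarge hsmall
end

section
/- Let X be a uniformly random bit and A a random variable taking values in a finite set S_A. Then 2·I(X:A) ≤ Σ_{a∈S_A} (Pr[A=a|X=0] - Pr[A=a|X=1])² / (Pr[A=a|X=0] + Pr[A=a|X=1]) ≤ 12·I(X:A). -/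
open Finset Real

/-- Mutual information between a uniformly random bit `X` and a random variable `A`
whose conditional distributions given `X = 0` and `X = 1` are `p0` and `p1`.
Here `Pr[A = a, X = x] = (1/2) * pₓ a`, `Pr[A = a] = (1/2) * (p0 a + p1 a)`,
`Pr[X = x] = 1/2`, so each term is `(1/2) pₓ a * log (2 pₓ a / (p0 a + p1 a))`.
Lean's conventions `log 0 = 0` and `y / 0 = 0` implement `0 · log 0 = 0`. -/
noncomputable def mutualInfoBit {α : Type*} [Fintype α] (p0 p1 : α → ℝ) : ℝ :=
  ∑ a, ((1 / 2) * p0 a * Real.log (2 * p0 a / (p0 a + p1 a)) +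
        (1 / 2) * p1 a * Real.log (2 * p1 a / (p0 a + p1 a)))

/-!
For `p = Pr[A = a | X = 0]`, `q = Pr[A = a | X = 1]` and `t = (p - q) / (p + q) ∈ [-1, 1]`, the
`a`-summand of `2 I(X:A)` is `(p + q) / 2 * φ t` with `φ t = (1 + t) log (1 + t) + (1 - t) log (1 - t)`,
while the `a`-summand of the χ²-sum is `(p + q) * t ^ 2`. Both bounds therefore follow termwise from
`t ^ 2 ≤ φ t ≤ 2 t ^ 2`. The upper estimate is `log x ≤ x - 1`; for the lower one, `φ t - t ^ 2`
vanishes at `0`, is even, and has derivative `log ((1 + t) / (1 - t)) - 2 t = 2 (artanh t - t) ≥ 0`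
for `t ≥ 0`. This even gives the constant `4` instead of `12`.
-/

lemma hasDerivAt_one_add_mul_log_add_one_sub_mul_log {t : ℝ} (h0 : -1 < t) (h1 : t < 1) :
    HasDerivAt (fun t => (1 + t) * log (1 + t) + (1 - t) * log (1 - t))
      (log (1 + t) - log (1 - t)) t := by
  have hplus := (hasDerivAt_mul_log (by linarith : 1 + t ≠ 0)).comp_const_add 1 t
  have hminus := (hasDerivAt_mul_log (by linarith : 1 - t ≠ 0)).comp_const_sub 1 t
  exact (hplus.add hminus).congr_deriv (by ring)

lemma sq_le_one_add_mul_log_add_one_sub_mul_log_of_nonneg {t : ℝ} (h0 : 0 ≤ t) (h1 : t ≤ 1) :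
    t ^ 2 ≤ (1 + t) * log (1 + t) + (1 - t) * log (1 - t) := by
  let g t := (1 + t) * log (1 + t) + (1 - t) * log (1 - t) - t ^ 2
  suffices MonotoneOn g (Set.Icc 0 1) by
    simpa [g] using this ⟨le_rfl, zero_le_one⟩ ⟨h0, h1⟩ h0
  have hg : Continuous g := by fun_prop
  refine monotoneOn_of_hasDerivWithinAt_nonneg (f' := fun s => log (1 + s) - log (1 - s) - 2 * s)
    (convex_Icc 0 1) hg.continuousOn (fun s hs => ?_) (fun s hs => ?_)
  · rw [interior_Icc] at hs
    have := (hasDerivAt_one_add_mul_log_add_one_sub_mul_log (by linarith [hs.1]) hs.2).sub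
      (hasDerivAt_pow 2 s)
    exact (this.congr_deriv (by ring)).hasDerivWithinAt
  · rw [interior_Icc] at hs
    -- `s ≤ artanh s = log ((1 + s) / (1 - s)) / 2`, the first Taylor partial sum
    have hartanh := sum_range_le_log_div hs.1.le hs.2 1
    rw [log_div (by linarith [hs.1]) (by linarith [hs.2])] at hartanh
    simp only [range_one, sum_singleton, mul_zero, zero_add, pow_one, CharP.cast_eq_zero, div_one,
      one_div] at hartanh
    linarith

lemma sq_le_one_add_mul_log_add_one_sub_mul_log {t : ℝ} (ht : |t| ≤ 1) :
    t ^ 2 ≤ (1 + t) * log (1 + t) + (1 - t) * log (1 - t) := by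
  rw [abs_le] at ht
  rcases le_total 0 t with h | h
  · exact sq_le_one_add_mul_log_add_one_sub_mul_log_of_nonneg h ht.2
  · have := sq_le_one_add_mul_log_add_one_sub_mul_log_of_nonneg (neg_nonneg.2 h)
      (neg_le.1 ht.1)
    rw [neg_sq, sub_neg_eq_add, ← sub_eq_add_neg] at this
    linarith

lemma mul_log_le_mul_sub_one {x : ℝ} (hx : 0 ≤ x) : x * log x ≤ x * (x - 1) := by
  rcases hx.eq_or_lt with rfl | hx
  · simp
  · exact mul_le_mul_of_nonneg_left (log_le_sub_one_of_pos hx) hx.le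

lemma one_add_mul_log_add_one_sub_mul_log_le {t : ℝ} (ht : |t| ≤ 1) :
    (1 + t) * log (1 + t) + (1 - t) * log (1 - t) ≤ 2 * t ^ 2 := by
  rw [abs_le] at ht
  have := mul_log_le_mul_sub_one (by linarith : 0 ≤ 1 + t)
  have := mul_log_le_mul_sub_one (by linarith : 0 ≤ 1 - t)
  nlinarith

lemma mul_log_add_mul_log_eq {p q : ℝ} (hpq : 0 < p + q) :
    p * log (2 * p / (p + q)) + q * log (2 * q / (p + q)) =
      (p + q) / 2 * ((1 + (p - q) / (p + q)) * log (1 + (p - q) / (p + q)) +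
        (1 - (p - q) / (p + q)) * log (1 - (p - q) / (p + q))) := by
  have hp : 1 + (p - q) / (p + q) = 2 * p / (p + q) := by field_simp; ring
  have hq : 1 - (p - q) / (p + q) = 2 * q / (p + q) := by field_simp; ring
  rw [hp, hq]
  field_simp

lemma abs_sub_div_add_le_one {p q : ℝ} (hp : 0 ≤ p) (hq : 0 ≤ q) : |(p - q) / (p + q)| ≤ 1 := by
  rcases (add_nonneg hp hq).eq_or_lt with h | h
  · simp [← h]
  · rw [abs_div, abs_of_pos h, div_le_one h, abs_le]
    constructor <;> linarith

lemma sq_div_add_eq {p q : ℝ} (hpq : 0 < p + q) :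
    (p - q) ^ 2 / (p + q) = (p + q) * ((p - q) / (p + q)) ^ 2 := by
  field_simp

lemma sq_div_add_le_two_mul_mul_log_add_mul_log {p q : ℝ} (hp : 0 ≤ p) (hq : 0 ≤ q) :
    (p - q) ^ 2 / (p + q) ≤ 2 * (p * log (2 * p / (p + q)) + q * log (2 * q / (p + q))) := by
  rcases (add_nonneg hp hq).eq_or_lt with h | h
  · simp [← h]
  · rw [mul_log_add_mul_log_eq h, sq_div_add_eq h]
    have := sq_le_one_add_mul_log_add_one_sub_mul_log (abs_sub_div_add_le_one hp hq)
    nlinarith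

lemma mul_log_add_mul_log_le_sq_div_add {p q : ℝ} (hp : 0 ≤ p) (hq : 0 ≤ q) :
    p * log (2 * p / (p + q)) + q * log (2 * q / (p + q)) ≤ (p - q) ^ 2 / (p + q) := by
  rcases (add_nonneg hp hq).eq_or_lt with h | h
  · simp [← h]
  · rw [mul_log_add_mul_log_eq h, sq_div_add_eq h]
    have := one_add_mul_log_add_one_sub_mul_log_le (abs_sub_div_add_le_one hp hq)
    nlinarith

lemma two_mul_mutualInfoBit {α : Type*} [Fintype α] (p0 p1 : α → ℝ) :
    2 * mutualInfoBit p0 p1 = ∑ a, (p0 a * log (2 * p0 a / (p0 a + p1 a)) +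
      p1 a * log (2 * p1 a / (p0 a + p1 a))) := by
  rw [mutualInfoBit, mul_sum]
  congr! 1 with a
  ring

theorem mutualInfo_chiSq_bounds_general {α : Type*} [Fintype α] (p0 p1 : α → ℝ)
    (h0 : ∀ a, 0 ≤ p0 a) (h1 : ∀ a, 0 ≤ p1 a) :
    2 * mutualInfoBit p0 p1 ≤ ∑ a, (p0 a - p1 a) ^ 2 / (p0 a + p1 a) ∧
      ∑ a, (p0 a - p1 a) ^ 2 / (p0 a + p1 a) ≤ 12 * mutualInfoBit p0 p1 := by
  have hupper := sum_le_sum fun a (_ : a ∈ univ) =>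
    mul_log_add_mul_log_le_sq_div_add (h0 a) (h1 a)
  have hlower := sum_le_sum fun a (_ : a ∈ univ) =>
    sq_div_add_le_two_mul_mul_log_add_mul_log (h0 a) (h1 a)
  have hchiSq_nonneg : 0 ≤ ∑ a, (p0 a - p1 a) ^ 2 / (p0 a + p1 a) :=
    sum_nonneg fun a _ => div_nonneg (sq_nonneg _) (add_nonneg (h0 a) (h1 a))
  rw [← two_mul_mutualInfoBit] at hupper
  rw [← mul_sum, ← two_mul_mutualInfoBit] at hlower
  exact ⟨hupper, by linarith⟩

theorem mutualInfo_chiSq_bounds {α : Type*} [Fintype α] (p0 p1 : α → ℝ)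
    (h0 : ∀ a, 0 ≤ p0 a) (h1 : ∀ a, 0 ≤ p1 a)
    (hs0 : ∑ a, p0 a = 1) (hs1 : ∑ a, p1 a = 1) :
    2 * mutualInfoBit p0 p1 ≤ ∑ a, (p0 a - p1 a) ^ 2 / (p0 a + p1 a) ∧
      ∑ a, (p0 a - p1 a) ^ 2 / (p0 a + p1 a) ≤ 12 * mutualInfoBit p0 p1 :=
  mutualInfo_chiSq_bounds_general p0 p1 h0 h1
end

section
/- Let X be distributed so that Pr[X = k] = x^{2k} e^{−x}/(2k)! + x^{2k+1} e^{−x}/(2k+1)! for k ∈ ℕ (i.e., X = ⌊Y/2⌋ where Y ~ Poi(x)). Then E[X] = x/2 − (e^{−x}/2)·sinh(x) and E[X²] = x²/4 − (x·e^{−2x})/4 + (e^{−x}/4)·sinh(x). -/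
/-!
Since `⌊n/2⌋ = (2n - 1 + (-1)^n)/4` and `(-1)^n x^n = (-x)^n`, the first two moments of `⌊Y/2⌋`
are linear combinations of the series `∑ n^j y^n/n!` (`j ≤ 2`) at `y = x` and `y = -x`, which
equal `e^y`, `y e^y` and `(y^2 + y) e^y` by the shift `(n+1) y^(n+1)/(n+1)! = y · y^n/n!`.
-/

open Nat Real

theorem HasSum.pair_add {G : Type*} [AddCommGroup G] [UniformSpace G] [IsUniformAddGroup G]
    [CompleteSpace G] [T2Space G] {f : ℕ → G} {a : G} (hf : HasSum f a) :
    HasSum (fun k ↦ f (2 * k) + f (2 * k + 1)) a := by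
  have h2 : Function.Injective (2 * · : ℕ → ℕ) := mul_right_injective₀ two_ne_zero
  obtain ⟨b, hb⟩ := hf.summable.comp_injective h2
  obtain ⟨c, hc⟩ := hf.summable.comp_injective ((add_left_injective 1).comp h2)
  rw [← (hb.even_add_odd hc).unique hf]
  exact hb.add hc

theorem HasSum.regroup_div_two {R : Type*} [Ring R] [UniformSpace R]
    [IsUniformAddGroup R] [CompleteSpace R] [T2Space R] {c p : ℕ → R} {a : R}
    (h : HasSum (fun n ↦ c (n / 2) * p n) a) :
    HasSum (fun k ↦ c k * (p (2 * k) + p (2 * k + 1))) a := by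
  have hk (k : ℕ) : (2 * k + 1) / 2 = k := by omega
  simpa [hk, mul_add] using h.pair_add

theorem four_mul_natCast_div_two {R : Type*} [CommRing R] (n : ℕ) :
    4 * ((n / 2 : ℕ) : R) = 2 * n - 1 + (-1) ^ n := by
  obtain ⟨k, rfl | rfl⟩ := n.even_or_odd'
  · rw [show 2 * k / 2 = k by omega, pow_mul, neg_one_sq, one_pow]
    push_cast
    ring
  · rw [show (2 * k + 1) / 2 = k by omega, pow_succ, pow_mul, neg_one_sq, one_pow]
    push_cast
    ring

theorem natCast_succ_mul_pow_div_factorial (y : ℝ) (n : ℕ) :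
    ((n : ℝ) + 1) * (y ^ (n + 1) / (n + 1)!) = y * (y ^ n / n !) := by
  rw [factorial_succ, cast_mul, pow_succ]
  field_simp
  push_cast
  ring

theorem Real.hasSum_pow_div_factorial (y : ℝ) : HasSum (fun n ↦ y ^ n / n !) (exp y) := by
  simpa [exp_eq_exp_ℝ] using NormedSpace.expSeries_div_hasSum_exp y

theorem Real.hasSum_natCast_mul_pow_div_factorial (y : ℝ) :
    HasSum (fun n : ℕ ↦ n * (y ^ n / n !)) (y * exp y) := by
  refine (hasSum_nat_add_iff' 1).mp ?_
  simpa [natCast_succ_mul_pow_div_factorial] using (hasSum_pow_div_factorial y).mul_left y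

theorem Real.hasSum_natCast_sq_mul_pow_div_factorial (y : ℝ) :
    HasSum (fun n : ℕ ↦ n ^ 2 * (y ^ n / n !)) ((y ^ 2 + y) * exp y) := by
  refine (hasSum_nat_add_iff' 1).mp ?_
  have h := ((hasSum_natCast_mul_pow_div_factorial y).add (hasSum_pow_div_factorial y)).mul_left y
  rw [Finset.sum_range_one, cast_zero, zero_pow two_ne_zero, zero_mul, sub_zero,
    show (y ^ 2 + y) * exp y = y * (y * exp y + exp y) by ring]
  refine h.congr_fun fun n ↦ ?_
  push_cast
  rw [sq, mul_assoc, natCast_succ_mul_pow_div_factorial]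
  ring

theorem Real.exp_neg_mul_exp (x : ℝ) : exp (-x) * exp x = 1 := by
  rw [← exp_add, neg_add_cancel, exp_zero]

theorem hasSum_div_two_mul_poisson (x : ℝ) :
    HasSum (fun n : ℕ ↦ ((n / 2 : ℕ) : ℝ) * (x ^ n * exp (-x) / n !))
      (x / 2 - (exp (-x) / 2) * sinh x) := by
  have h := ((((hasSum_natCast_mul_pow_div_factorial x).mul_left 2).sub
    (hasSum_pow_div_factorial x)).add (hasSum_pow_div_factorial (-x))).mul_left (exp (-x) / 4)
  have hsum : x / 2 - exp (-x) / 2 * sinh x =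
      exp (-x) / 4 * (2 * (x * exp x) - exp x + exp (-x)) := by
    rw [sinh_eq]
    linear_combination -(x / 2) * exp_neg_mul_exp x
  rw [hsum]
  refine h.congr_fun fun n ↦ ?_
  rw [neg_pow]
  linear_combination (x ^ n * exp (-x) / n ! / 4) * four_mul_natCast_div_two (R := ℝ) n

theorem hasSum_div_two_sq_mul_poisson (x : ℝ) :
    HasSum (fun n : ℕ ↦ ((n / 2 : ℕ) : ℝ) ^ 2 * (x ^ n * exp (-x) / n !))
      (x ^ 2 / 4 - x * exp (-2 * x) / 4 + (exp (-x) / 4) * sinh x) := by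
  have h := ((((((hasSum_natCast_sq_mul_pow_div_factorial x).mul_left 4).sub
    ((hasSum_natCast_mul_pow_div_factorial x).mul_left 4)).add
    ((hasSum_pow_div_factorial x).mul_left 2)).add
    ((hasSum_natCast_mul_pow_div_factorial (-x)).mul_left 4)).sub
    ((hasSum_pow_div_factorial (-x)).mul_left 2)).mul_left (exp (-x) / 16)
  have hsum : x ^ 2 / 4 - x * exp (-2 * x) / 4 + exp (-x) / 4 * sinh x =
      exp (-x) / 16 * (4 * ((x ^ 2 + x) * exp x) - 4 * (x * exp x) + 2 * exp x +
        4 * (-x * exp (-x)) - 2 * exp (-x)) := by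
    rw [sinh_eq, show -2 * x = -x + -x by ring, exp_add]
    linear_combination -(x ^ 2 / 4) * exp_neg_mul_exp x
  rw [hsum]
  refine h.congr_fun fun n ↦ ?_
  have hsign : ((-1 : ℝ) ^ n) ^ 2 = 1 := by rw [← pow_mul, pow_mul', neg_one_sq, one_pow]
  rw [neg_pow]
  linear_combination (x ^ n * exp (-x) / n ! / 16) *
    ((4 * ((n / 2 : ℕ) : ℝ) + 2 * n - 1 + (-1) ^ n) * four_mul_natCast_div_two (R := ℝ) n + hsign)

theorem halfPoisson_moments_general (x : ℝ) :
    (∑' k : ℕ, (k : ℝ) *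
        (x ^ (2 * k) * Real.exp (-x) / ((2 * k).factorial : ℝ) +
         x ^ (2 * k + 1) * Real.exp (-x) / ((2 * k + 1).factorial : ℝ))) =
      x / 2 - (Real.exp (-x) / 2) * Real.sinh x ∧
    (∑' k : ℕ, (k : ℝ) ^ 2 *
        (x ^ (2 * k) * Real.exp (-x) / ((2 * k).factorial : ℝ) +
         x ^ (2 * k + 1) * Real.exp (-x) / ((2 * k + 1).factorial : ℝ))) =
      x ^ 2 / 4 - x * Real.exp (-2 * x) / 4 + (Real.exp (-x) / 4) * Real.sinh x := by
  constructor
  · exact HasSum.tsum_eq <| HasSum.regroup_div_two (c := fun k ↦ (k : ℝ))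
      (p := fun n ↦ x ^ n * exp (-x) / (n !)) (hasSum_div_two_mul_poisson x)
  · exact HasSum.tsum_eq <| HasSum.regroup_div_two (c := fun k ↦ (k : ℝ) ^ 2)
      (p := fun n ↦ x ^ n * exp (-x) / (n !)) (hasSum_div_two_sq_mul_poisson x)

/-- Moments of the "half-Poisson" variable `X = ⌊Y/2⌋` with `Y ~ Poi(x)`:
`Pr[X = k] = x^{2k} e^{-x}/(2k)! + x^{2k+1} e^{-x}/(2k+1)!`. -/
theorem halfPoisson_moments (x : ℝ) (hx : 0 < x) :
    (∑' k : ℕ, (k : ℝ) *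
        (x ^ (2 * k) * Real.exp (-x) / ((2 * k).factorial : ℝ) +
         x ^ (2 * k + 1) * Real.exp (-x) / ((2 * k + 1).factorial : ℝ))) =
      x / 2 - (Real.exp (-x) / 2) * Real.sinh x ∧
    (∑' k : ℕ, (k : ℝ) ^ 2 *
        (x ^ (2 * k) * Real.exp (-x) / ((2 * k).factorial : ℝ) +
         x ^ (2 * k + 1) * Real.exp (-x) / ((2 * k + 1).factorial : ℝ))) =
      x ^ 2 / 4 - x * Real.exp (-2 * x) / 4 + (Real.exp (-x) / 4) * Real.sinh x :=
  halfPoisson_moments_general x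
end

section
/- For x > 0, the half-Poisson second moment satisfies E[X²] ≤ (3/4)·x², where X has distribution Pr[X=k] = x^{2k} e^{−x}/(2k)! + x^{2k+1} e^{−x}/(2k+1)! for k ∈ ℕ. -/
/-- The second moment of the "half-Poisson" variable `X = ⌊Y/2⌋`, `Y ~ Poi(x)`,
satisfies `E[X²] ≤ (3/4) x²`. -/
theorem halfPoisson_secondMoment_le (x : ℝ) (hx : 0 < x) :
    (∑' k : ℕ, (k : ℝ) ^ 2 *
        (x ^ (2 * k) * Real.exp (-x) / ((2 * k).factorial : ℝ) +
         x ^ (2 * k + 1) * Real.exp (-x) / ((2 * k + 1).factorial : ℝ))) ≤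
      (3 / 4) * x ^ 2 := by
  set F : ℕ → ℝ := fun n => (n : ℝ) * ((n : ℝ) - 1) * (x ^ n * Real.exp (-x) / n.factorial)
    with hFdef
  have hxnn : (0:ℝ) ≤ x := hx.le
  have hFshift : ∀ n : ℕ, F (n + 2) = (x ^ 2 * Real.exp (-x)) * (x ^ n / n.factorial) := by
    intro n
    have hfac : ((n + 2).factorial : ℝ) = ((n:ℝ) + 2) * ((n:ℝ) + 1) * n.factorial := by
      rw [Nat.factorial_succ, Nat.factorial_succ]
      push_cast; ring
    have hfacpos : (0:ℝ) < n.factorial := by positivity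
    simp only [hFdef, hfac]
    push_cast
    field_simp
    ring
  have hFnonneg : ∀ n : ℕ, 0 ≤ F n := by
    intro n
    have : (0:ℝ) ≤ (n : ℝ) * ((n : ℝ) - 1) := by
      rcases n with _ | m
      · simp
      · have : (1:ℝ) ≤ ((m + 1 : ℕ) : ℝ) := by exact_mod_cast Nat.one_le_iff_ne_zero.2 (by simp)
        nlinarith
    have h2 : (0:ℝ) ≤ x ^ n * Real.exp (-x) / n.factorial := by positivity
    exact mul_nonneg this h2
  have hFsummable : Summable F := by
    rw [← summable_nat_add_iff 2]
    simp only [hFshift]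
    exact (Real.summable_pow_div_factorial x).mul_left _
  have hFsum : ∑' n, F n = x ^ 2 := by
    have h := Summable.sum_add_tsum_nat_add 2 hFsummable (f := F)
    have h01 : ∑ i ∈ Finset.range 2, F i = 0 := by
      simp [hFdef, Finset.sum_range_succ]
    have htail : ∑' n : ℕ, F (n + 2) = x ^ 2 := by
      simp only [hFshift]
      rw [tsum_mul_left]
      have hexp : ∑' n : ℕ, x ^ n / (n.factorial : ℝ) = Real.exp x := by
        rw [Real.exp_eq_exp_ℝ, NormedSpace.exp_eq_tsum_div]
      rw [hexp, Real.exp_neg]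
      field_simp
    rw [← h, h01, htail, zero_add]
  have hEven : Summable (fun k : ℕ => F (2 * k)) :=
    hFsummable.comp_injective (fun a b hab => by omega)
  have hOdd : Summable (fun k : ℕ => F (2 * k + 1)) :=
    hFsummable.comp_injective (fun a b hab => by omega)
  have hG : Summable (fun k : ℕ => (3 / 4 : ℝ) * (F (2 * k) + F (2 * k + 1))) :=
    (hEven.add hOdd).mul_left _
  have hpt : ∀ k : ℕ, (k : ℝ) ^ 2 *
        (x ^ (2 * k) * Real.exp (-x) / ((2 * k).factorial : ℝ) +
         x ^ (2 * k + 1) * Real.exp (-x) / ((2 * k + 1).factorial : ℝ)) ≤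
      (3 / 4 : ℝ) * (F (2 * k) + F (2 * k + 1)) := by
    intro k
    have hA : (0:ℝ) ≤ x ^ (2 * k) * Real.exp (-x) / ((2 * k).factorial : ℝ) := by positivity
    have hB : (0:ℝ) ≤ x ^ (2 * k + 1) * Real.exp (-x) / ((2 * k + 1).factorial : ℝ) := by
      positivity
    have hc1 : (k : ℝ) ^ 2 ≤ (3 / 4) * (((2 * k : ℕ) : ℝ) * (((2 * k : ℕ) : ℝ) - 1)) := by
      rcases Nat.eq_zero_or_pos k with hk | hk
      · subst hk; norm_num
      · have : (1:ℝ) ≤ (k : ℝ) := by exact_mod_cast hk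
        push_cast; nlinarith
    have hc2 : (k : ℝ) ^ 2 ≤
        (3 / 4) * (((2 * k + 1 : ℕ) : ℝ) * (((2 * k + 1 : ℕ) : ℝ) - 1)) := by
      push_cast; nlinarith [sq_nonneg (k : ℝ), Nat.cast_nonneg (α := ℝ) k]
    have h1 := mul_le_mul_of_nonneg_right hc1 hA
    have h2 := mul_le_mul_of_nonneg_right hc2 hB
    simp only [hFdef]
    nlinarith [h1, h2]
  have hLHSsummable : Summable (fun k : ℕ => (k : ℝ) ^ 2 *
        (x ^ (2 * k) * Real.exp (-x) / ((2 * k).factorial : ℝ) +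
         x ^ (2 * k + 1) * Real.exp (-x) / ((2 * k + 1).factorial : ℝ))) := by
    apply Summable.of_nonneg_of_le _ hpt hG
    intro k
    have hA : (0:ℝ) ≤ x ^ (2 * k) * Real.exp (-x) / ((2 * k).factorial : ℝ) := by positivity
    have hB : (0:ℝ) ≤ x ^ (2 * k + 1) * Real.exp (-x) / ((2 * k + 1).factorial : ℝ) := by
      positivity
    positivity
  calc (∑' k : ℕ, (k : ℝ) ^ 2 *
        (x ^ (2 * k) * Real.exp (-x) / ((2 * k).factorial : ℝ) +
         x ^ (2 * k + 1) * Real.exp (-x) / ((2 * k + 1).factorial : ℝ)))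
      ≤ ∑' k : ℕ, (3 / 4 : ℝ) * (F (2 * k) + F (2 * k + 1)) :=
        Summable.tsum_le_tsum hpt hLHSsummable hG
    _ = (3 / 4) * ((∑' k : ℕ, F (2 * k)) + ∑' k : ℕ, F (2 * k + 1)) := by
        rw [tsum_mul_left, Summable.tsum_add hEven hOdd]
    _ = (3 / 4) * ∑' n, F n := by rw [← tsum_even_add_odd hEven hOdd]
    _ = (3 / 4) * x ^ 2 := by rw [hFsum]
end

section
/- Let P and Q be probability distributions on a finite set, T a subset with |T| = m, and x > 0 a real. Then D_H²(P^T, Q^T) ≤ (1/x)·‖P^T − Q^T‖₂² + m·x. Consequently, if D_H²(P^T, Q^T) ≥ ε then choosing x = ε/(2m) gives ‖P^T − Q^T‖₂ ≥ ε/(2√m). -/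
open Finset

lemma hellinger_pointwise_aux (a b x : ℝ) (ha : 0 ≤ a) (hb : 0 ≤ b) (hx : 0 < x) :
    (Real.sqrt a - Real.sqrt b) ^ 2 ≤ x + (a - b) ^ 2 / x := by
  rcases le_or_gt ((Real.sqrt a - Real.sqrt b) ^ 2) x with h | h
  · exact le_add_of_le_of_nonneg h (by positivity)
  · have hsa := Real.sq_sqrt ha
    have hsb := Real.sq_sqrt hb
    have hna := Real.sqrt_nonneg a
    have hnb := Real.sqrt_nonneg b
    have key : (a - b) ^ 2 = (Real.sqrt a - Real.sqrt b) ^ 2 * (Real.sqrt a + Real.sqrt b) ^ 2 := by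
      nlinarith
    have h2 : x < (Real.sqrt a + Real.sqrt b) ^ 2 := lt_of_lt_of_le h (by nlinarith)
    have : (Real.sqrt a - Real.sqrt b) ^ 2 ≤ (a - b) ^ 2 / x := by
      rw [le_div_iff₀ hx, key]
      nlinarith [sq_nonneg (Real.sqrt a - Real.sqrt b)]
    linarith [hx.le]

lemma hellinger_sum_aux {α : Type*} (P Q : α → ℝ) (hP : ∀ x, 0 ≤ P x) (hQ : ∀ x, 0 ≤ Q x)
    (T : Finset α) (x : ℝ) (hx : 0 < x) :
    (1 / 2) * ∑ t ∈ T, (Real.sqrt (P t) - Real.sqrt (Q t)) ^ 2 ≤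
      (1 / x) * (∑ t ∈ T, (P t - Q t) ^ 2) + T.card * x := by
  have h1 : ∑ t ∈ T, (Real.sqrt (P t) - Real.sqrt (Q t)) ^ 2 ≤
      ∑ t ∈ T, (x + (P t - Q t) ^ 2 / x) :=
    Finset.sum_le_sum fun t _ => hellinger_pointwise_aux _ _ _ (hP t) (hQ t) hx
  have h2 : ∑ t ∈ T, (x + (P t - Q t) ^ 2 / x) =
      T.card * x + (1 / x) * ∑ t ∈ T, (P t - Q t) ^ 2 := by
    rw [Finset.sum_add_distrib, Finset.sum_const, Finset.mul_sum]
    simp [div_eq_inv_mul, mul_comm]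
  have h3 : (0:ℝ) ≤ ∑ t ∈ T, (Real.sqrt (P t) - Real.sqrt (Q t)) ^ 2 :=
    Finset.sum_nonneg fun t _ => sq_nonneg _
  linarith

theorem hellingerSq_restricted_le_l2_add_card_mul {α : Type*} [Fintype α]
    (P Q : α → ℝ) (hP : ∀ x, 0 ≤ P x) (hQ : ∀ x, 0 ≤ Q x)
    (hPs : ∑ x, P x = 1) (hQs : ∑ x, Q x = 1)
    (T : Finset α) (x : ℝ) (hx : 0 < x) :
    ((1 / 2) * ∑ t ∈ T, (Real.sqrt (P t) - Real.sqrt (Q t)) ^ 2 ≤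
        (1 / x) * (∑ t ∈ T, (P t - Q t) ^ 2) + T.card * x) ∧
      ∀ ε : ℝ, 0 < ε →
        ε ≤ (1 / 2) * ∑ t ∈ T, (Real.sqrt (P t) - Real.sqrt (Q t)) ^ 2 →
        ε / (2 * Real.sqrt T.card) ≤ Real.sqrt (∑ t ∈ T, (P t - Q t) ^ 2) := by
  refine ⟨hellinger_sum_aux P Q hP hQ T x hx, ?_⟩
  intro ε hε hεle
  set S := ∑ t ∈ T, (P t - Q t) ^ 2 with hS
  have hSnn : 0 ≤ S := Finset.sum_nonneg fun t _ => sq_nonneg _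
  have hm : 0 < (T.card : ℝ) := by
    by_contra h
    push_neg at h
    have : T.card = 0 := by exact_mod_cast le_antisymm (by exact_mod_cast h) (Nat.zero_le _)
    have hT : T = ∅ := Finset.card_eq_zero.mp this
    simp [hT] at hεle
    linarith
  set m : ℝ := (T.card : ℝ)
  have hx2 : 0 < ε / (2 * m) := by positivity
  have hb := hellinger_sum_aux P Q hP hQ T (ε / (2 * m)) hx2
  have hkey : ε ≤ (2 * m / ε) * S + ε / 2 := by
    have h1 : (1 / (ε / (2 * m))) = 2 * m / ε := by
      field_simp
    have h2 : m * (ε / (2 * m)) = ε / 2 := by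
      field_simp
    calc ε ≤ _ := hεle
      _ ≤ (1 / (ε / (2 * m))) * S + m * (ε / (2 * m)) := hb
      _ = (2 * m / ε) * S + ε / 2 := by rw [h1, h2]
  have hSge : ε ^ 2 / (4 * m) ≤ S := by
    rw [div_le_iff₀ (by positivity)]
    have hdiv : 2 * m / ε * S * ε = 2 * m * S := by field_simp
    nlinarith [hkey, hε, hSnn, hm]
  have hsm : Real.sqrt m ^ 2 = m := Real.sq_sqrt hm.le
  have hsmpos : 0 < Real.sqrt m := Real.sqrt_pos.mpr hm
  have hsq : (ε / (2 * Real.sqrt m)) ^ 2 ≤ S := by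
    rw [div_pow]
    have : (2 * Real.sqrt m) ^ 2 = 4 * m := by rw [mul_pow, hsm]; ring
    rw [this]
    exact hSge
  calc ε / (2 * Real.sqrt m) ≤ Real.sqrt ((ε / (2 * Real.sqrt m)) ^ 2) := by
        rw [Real.sqrt_sq (by positivity)]
    _ ≤ Real.sqrt S := Real.sqrt_le_sqrt hsq
end
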